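/- Let $S\leq T$ be $\mathbb{G}$-stopping times. For any $\mathbb{G}$-predictable process $K$, both $K^{(S,T]}$ and $\mathbf{1}_{(S,T]}K$ are $\mathbb{G}^{(S,T]}$-predictable processes. Conversely, for any $\mathbb{G}^{(S,T]}$-predictable process $K'$, both $K'^{(S,T]}$ and $\mathbf{1}_{(S,T]}K'$ are $\mathbb{G}$-predictable processes. -/

import Mathlib

/-!
On `{S < t} ∩ {S < T}` one has `K^{(S,T]}_t = K_{t ∧ T} - K_S` and
`1_{(S,T]} K = 1_{(S,T]} K_{t ∧ T}`, so both directions follow once `(t, ω) ↦ (t ∧ T ω, ω)` and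
`(t, ω) ↦ (S ω, ω)`, restricted to that set, pull predictable sets of one filtration back to
predictable sets of the other. The argument is symmetric in the two filtrations: it only uses that
the target filtration contains at time `q` the `G_q`-events inside `{S ≤ q < T}`, that `T` is a
stopping time for it on `{S < T}`, and that the source filtration at time `a`, traced on
`{S ∨ a < T}`, lies in `G_{S ∨ a}`; both `G` and `𝒢^{(S,T]}` have these properties. The preimage
of a predictable rectangle is then built from sets `(R, b] × B` with `B ∈ G_R`, `B ⊆ {R < T}`,
which are countable unions of rectangles `(q, b] × (B ∩ {R ≤ q < T})`, `q` running through a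
countable dense subset of `[0, ∞]`.
-/

open MeasureTheory Set Filter
open scoped ENNReal

noncomputable section

variable {Ω : Type*} {m : MeasurableSpace Ω}

/-- The σ-algebra `F_T` associated with a random time `T`. -/
def sigmaAt (F : MeasureTheory.Filtration ℝ≥0∞ m) (T : Ω → ℝ≥0∞) : MeasurableSpace Ω :=
  MeasurableSpace.generateFrom {A | ∀ t, MeasurableSet[F t] (A ∩ {ω | T ω ≤ t})}

/-- The σ-algebra `F_{T-}` associated with a random time `T`. -/
def sigmaAtPred (F : MeasureTheory.Filtration ℝ≥0∞ m) (T : Ω → ℝ≥0∞) : MeasurableSpace Ω :=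
  MeasurableSpace.generateFrom
    ({A | MeasurableSet[F 0] A}
      ∪ (⋃ t : ℝ≥0∞, {s | ∃ A, MeasurableSet[F t] A ∧ s = A ∩ {ω | t < T ω}})
      ∪ {s | ∃ A, MeasurableSet[F ⊤] A ∧ s = A ∩ {ω | T ω = ⊤}})

/-- Progressive enlargement of the filtration `F` by the random time `τ`. -/
def progEnl (F : MeasureTheory.Filtration ℝ≥0∞ m) (τ : Ω → ℝ≥0∞) (t : ℝ≥0∞) :
    MeasurableSpace Ω :=
  if t = ⊤ then F ⊤ ⊔ MeasurableSpace.comap τ inferInstance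
  else ⨅ s ∈ Ioi t, (F s ⊔ MeasurableSpace.comap (fun ω => min (τ ω) s) inferInstance)

/-- The family of sets defining `𝒢*_T`. -/
def gStarSets (F : MeasureTheory.Filtration ℝ≥0∞ m) (τ T : Ω → ℝ≥0∞) : Set (Set Ω) :=
  {C | ∃ A₁, MeasurableSet[sigmaAt F T] A₁ ∧
      ∃ A₂, MeasurableSet[sigmaAt F T ⊔ MeasurableSpace.comap τ inferInstance] A₂ ∧
      ∃ A₃, MeasurableSet[F ⊤ ⊔ MeasurableSpace.comap τ inferInstance] A₃ ∧
      C = ({ω | T ω < τ ω} ∩ A₁) ∪ ({ω | τ ω ≤ T ω ∧ T ω ≠ ⊤} ∩ A₂) ∪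
          ({ω | T ω = ⊤} ∩ A₃)}

/-- The σ-algebra `𝒢*_T`. -/
def gStar (F : MeasureTheory.Filtration ℝ≥0∞ m) (τ T : Ω → ℝ≥0∞) : MeasurableSpace Ω :=
  MeasurableSpace.generateFrom (gStarSets F τ T)

/-- The family of sets defining `𝒢^{(S,T]}_t`. -/
def gFragSets (F G : MeasureTheory.Filtration ℝ≥0∞ m) (τ S T : Ω → ℝ≥0∞) (t : ℝ≥0∞) :
    Set (Set Ω) :=
  {C | ∃ A, MeasurableSet[gStar F τ T] A ∧
      ∃ B, MeasurableSet[sigmaAt G (fun ω => max (S ω) t)] B ∧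
      C = ({ω | T ω ≤ max (S ω) t} ∩ A) ∪ ({ω | max (S ω) t < T ω} ∩ B)}

/-- The σ-algebra `𝒢^{(S,T]}_t`. -/
def gFrag (F G : MeasureTheory.Filtration ℝ≥0∞ m) (τ S T : Ω → ℝ≥0∞) (t : ℝ≥0∞) :
    MeasurableSpace Ω :=
  MeasurableSpace.generateFrom (gFragSets F G τ S T t)

/-- Stopping time with respect to a family of σ-algebras. -/
def IsStoppingFam (𝒢 : ℝ≥0∞ → MeasurableSpace Ω) (R : Ω → ℝ≥0∞) : Prop :=
  ∀ t, MeasurableSet[𝒢 t] {ω | R ω ≤ t}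

/-- σ-algebra at a random time `R` for a family of σ-algebras. -/
def sigmaAtFam (𝒢 : ℝ≥0∞ → MeasurableSpace Ω) (R : Ω → ℝ≥0∞) : MeasurableSpace Ω :=
  MeasurableSpace.generateFrom {A | ∀ t, MeasurableSet[𝒢 t] (A ∩ {ω | R ω ≤ t})}

/-- Martingale with respect to a family of σ-algebras. -/
def MartOn (μ : Measure Ω) (𝒢 : ℝ≥0∞ → MeasurableSpace Ω) (X : ℝ≥0∞ → Ω → ℝ) : Prop :=
  (∀ t, Measurable[𝒢 t] (X t)) ∧ (∀ t, Integrable (X t) μ) ∧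
    ∀ s t, s ≤ t → ∀ A, MeasurableSet[𝒢 s] A →
      ∫ ω in A, X t ω ∂μ = ∫ ω in A, X s ω ∂μ

/-- The process `X` stopped at the random time `R`. -/
def stoppedAt (X : ℝ≥0∞ → Ω → ℝ) (R : Ω → ℝ≥0∞) : ℝ≥0∞ → Ω → ℝ :=
  fun t ω => X (min t (R ω)) ω

/-- Local martingale with respect to a family of σ-algebras. -/
def LocMartOn (μ : Measure Ω) (𝒢 : ℝ≥0∞ → MeasurableSpace Ω) (X : ℝ≥0∞ → Ω → ℝ) : Prop :=
  ∃ R : ℕ → Ω → ℝ≥0∞, (∀ n, IsStoppingFam 𝒢 (R n)) ∧ (∀ ω, Monotone fun n => R n ω) ∧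
    (∀ ω, ⨆ n, R n ω = ⊤) ∧ ∀ n, MartOn μ 𝒢 (stoppedAt X (R n))

/-- The process `X^{(S,T]}` (with the convention `X^{(S,T]} = X^{(S, S ∨ T]}`). -/
def frag (S T : Ω → ℝ≥0∞) (X : ℝ≥0∞ → Ω → ℝ) : ℝ≥0∞ → Ω → ℝ :=
  fun t ω => X (min (max (S ω) t) (max (S ω) (T ω))) ω - X (S ω) ω

/-- The predictable σ-algebra associated with a family of σ-algebras. -/
def predSigma (𝒢 : ℝ≥0∞ → MeasurableSpace Ω) : MeasurableSpace (ℝ≥0∞ × Ω) :=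
  MeasurableSpace.generateFrom
    ({C | ∃ s t : ℝ≥0∞, ∃ A, MeasurableSet[𝒢 s] A ∧ C = (Ioc s t) ×ˢ A} ∪
      {C | ∃ A, MeasurableSet[𝒢 0] A ∧ C = ({0} : Set ℝ≥0∞) ×ˢ A})

variable (μ : Measure Ω) [IsProbabilityMeasure μ] (F G : MeasureTheory.Filtration ℝ≥0∞ m)
  (τ : Ω → ℝ≥0∞) (hτ : Measurable τ)
  (hFrc : ∀ t, t ≠ ⊤ → (F t : MeasurableSpace Ω) = ⨅ s ∈ Ioi t, (F s : MeasurableSpace Ω))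
  (hG : ∀ t, (G t : MeasurableSpace Ω) = progEnl F τ t)

theorem MeasurableSet.preimage_inter_of_generateFrom {α β : Type*} {mα : MeasurableSpace α}
    {s : Set α} (hs : MeasurableSet s) {g : Set (Set β)} {f : α → β}
    (hf : ∀ C ∈ g, MeasurableSet (f ⁻¹' C ∩ s)) {C : Set β}
    (hC : MeasurableSet[MeasurableSpace.generateFrom g] C) : MeasurableSet (f ⁻¹' C ∩ s) := by
  induction C, hC using MeasurableSpace.generateFrom_induction with
  | hC C hC => exact hf C hC
  | empty => simp
  | compl C _ ih =>
    rw [preimage_compl, ← sdiff_eq_compl_inter, ← sdiff_inter_self_eq_sdiff]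
    exact hs.diff ih
  | iUnion f _ ih =>
    rw [preimage_iUnion, iUnion_inter]
    exact .iUnion ih

theorem Measurable.indicator_of_preimage_inter {α β : Type*} {mα : MeasurableSpace α}
    [MeasurableSpace β] [Zero β] {s : Set α} (hs : MeasurableSet s) {f : α → β}
    (hf : ∀ B, MeasurableSet B → MeasurableSet (f ⁻¹' B ∩ s)) : Measurable (s.indicator f) :=
  fun B hB => by
    rw [indicator_preimage]
    exact (hf B hB).union ((measurable_const hB).diff hs)

section StoppingTimes

variable {G} {R T : Ω → ℝ≥0∞}

theorem measurableSet_le_of_isStoppingTime (hR : IsStoppingTime G fun ω => (R ω : WithTop ℝ≥0∞))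
    (r : ℝ≥0∞) : MeasurableSet[G r] {ω | R ω ≤ r} := by
  simpa only [WithTop.coe_le_coe] using hR.measurableSet_le r

theorem sigmaAt_eq_measurableSpace (hR : IsStoppingTime G fun ω => (R ω : WithTop ℝ≥0∞)) :
    sigmaAt G R = hR.measurableSpace := by
  refine le_antisymm (MeasurableSpace.generateFrom_le fun A hA => ⟨?_, fun r => ?_⟩)
    fun A hA => MeasurableSpace.measurableSet_generateFrom fun r => by simpa using hA.2 r
  · exact le_iSup (fun t => (G t : MeasurableSpace Ω)) ⊤ A (by simpa using hA ⊤)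
  · simpa using hA r

theorem measurableSet_inter_le_of_sigmaAt (hR : IsStoppingTime G fun ω => (R ω : WithTop ℝ≥0∞))
    {B : Set Ω} (hB : MeasurableSet[sigmaAt G R] B) (r : ℝ≥0∞) :
    MeasurableSet[G r] (B ∩ {ω | R ω ≤ r}) := by
  rw [sigmaAt_eq_measurableSpace hR] at hB
  simpa using hB.2 r

theorem measurableSet_sigmaAt_le_const (hR : IsStoppingTime G fun ω => (R ω : WithTop ℝ≥0∞))
    (c : ℝ≥0∞) : MeasurableSet[sigmaAt G R] {ω | R ω ≤ c} := by
  rw [sigmaAt_eq_measurableSpace hR]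
  simpa using hR.measurableSet_le' c

theorem measurableSet_sigmaAt_lt (hR : IsStoppingTime G fun ω => (R ω : WithTop ℝ≥0∞))
    (hT : IsStoppingTime G fun ω => (T ω : WithTop ℝ≥0∞)) :
    MeasurableSet[sigmaAt G R] {ω | R ω < T ω} := by
  rw [sigmaAt_eq_measurableSpace hR]
  convert (hT.measurableSet_stopping_time_le hR).compl using 1
  ext ω
  simp

theorem measurableSet_sigmaAt_of_le {a : ℝ≥0∞} (hR : IsStoppingTime G fun ω => (R ω : WithTop ℝ≥0∞))
    (haR : ∀ ω, a ≤ R ω) {A : Set Ω} (hA : MeasurableSet[G a] A) :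
    MeasurableSet[sigmaAt G R] A := by
  rw [sigmaAt_eq_measurableSpace hR]
  exact hR.le_measurableSpace_of_const_le (by simpa using haR) A hA

theorem isStoppingTime_max_const {S : Ω → ℝ≥0∞}
    (hS : IsStoppingTime G fun ω => (S ω : WithTop ℝ≥0∞)) (a : ℝ≥0∞) :
    IsStoppingTime G fun ω => (max (S ω) a : WithTop ℝ≥0∞) := by
  simpa using hS.max_const a

end StoppingTimes

def ContainsTraceBetween (𝒢 : ℝ≥0∞ → MeasurableSpace Ω) (S T : Ω → ℝ≥0∞) : Prop :=
  ∀ q M, MeasurableSet[G q] M → M ⊆ {ω | S ω ≤ q} → MeasurableSet[𝒢 q] (M ∩ {ω | q < T ω})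

def TraceLeSigmaAt (𝒜 : ℝ≥0∞ → MeasurableSpace Ω) (S T : Ω → ℝ≥0∞) : Prop :=
  ∀ a A, MeasurableSet[𝒜 a] A →
    MeasurableSet[sigmaAt G fun ω => max (S ω) a] (A ∩ {ω | max (S ω) a < T ω})

def IsStoppingFamOn (𝒢 : ℝ≥0∞ → MeasurableSpace Ω) (T : Ω → ℝ≥0∞) (E : Set Ω) : Prop :=
  ∀ q, ∃ D, MeasurableSet[𝒢 q] D ∧ ∀ ω ∈ E, ω ∈ D ↔ T ω ≤ q

def fragTime (S T : Ω → ℝ≥0∞) (p : ℝ≥0∞ × Ω) : ℝ≥0∞ × Ω :=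
  (min (max (S p.2) p.1) (max (S p.2) (T p.2)), p.2)

def startTime (S : Ω → ℝ≥0∞) (p : ℝ≥0∞ × Ω) : ℝ≥0∞ × Ω := (S p.2, p.2)

def fragSupport (S T : Ω → ℝ≥0∞) : Set (ℝ≥0∞ × Ω) := {p | S p.2 < p.1 ∧ S p.2 < T p.2}

def stochasticIoc (S T : Ω → ℝ≥0∞) : Set (ℝ≥0∞ × Ω) := {p | S p.2 < p.1 ∧ p.1 ≤ T p.2}

section Predictable

variable {G} {𝒢 𝒜 : ℝ≥0∞ → MeasurableSpace Ω} {R S T : Ω → ℝ≥0∞}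

theorem measurableSet_predSigma_Ioc_prod (s t : ℝ≥0∞) {A : Set Ω} (hA : MeasurableSet[𝒢 s] A) :
    MeasurableSet[predSigma 𝒢] (Ioc s t ×ˢ A) :=
  MeasurableSpace.measurableSet_generateFrom (Or.inl ⟨s, t, A, hA, rfl⟩)

theorem measurableSet_predSigma_Ioc_inter (h𝒢 : ContainsTraceBetween G 𝒢 S T)
    (hR : IsStoppingTime G fun ω => (R ω : WithTop ℝ≥0∞)) (hSR : ∀ ω, S ω ≤ R ω) (b : ℝ≥0∞)
    {B : Set Ω} (hB : MeasurableSet[sigmaAt G R] B) (hBT : B ⊆ {ω | R ω < T ω}) :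
    MeasurableSet[predSigma 𝒢] {p | R p.2 < p.1 ∧ p.1 ≤ b ∧ p.2 ∈ B} := by
  obtain ⟨Q, hQc, hQd⟩ := TopologicalSpace.exists_countable_dense ℝ≥0∞
  have hunion : {p : ℝ≥0∞ × Ω | R p.2 < p.1 ∧ p.1 ≤ b ∧ p.2 ∈ B}
      = ⋃ q ∈ Q, Ioc q b ×ˢ (B ∩ {ω | R ω ≤ q} ∩ {ω | q < T ω}) := by
    ext ⟨t, ω⟩
    simp only [mem_ofPred_eq, mem_iUnion, mem_prod, mem_Ioc, mem_inter_iff, exists_prop]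
    constructor
    · rintro ⟨hRt, htb, hωB⟩
      obtain ⟨q, hqQ, hRq, hqt⟩ := hQd.exists_between (lt_min hRt (hBT hωB))
      exact ⟨q, hqQ, ⟨(lt_min_iff.1 hqt).1, htb⟩, ⟨hωB, hRq.le⟩, (lt_min_iff.1 hqt).2⟩
    · rintro ⟨q, -, ⟨hqt, htb⟩, ⟨hωB, hRq⟩, -⟩
      exact ⟨hRq.trans_lt hqt, htb, hωB⟩
  rw [hunion]
  refine .biUnion hQc fun q _ => measurableSet_predSigma_Ioc_prod q b ?_
  exact h𝒢 q _ (measurableSet_inter_le_of_sigmaAt hR hB q) fun ω hω => (hSR ω).trans hω.2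

theorem exists_measurableSet_predSigma_iff_lt {E : Set Ω} (hT𝒢 : IsStoppingFamOn 𝒢 T E) :
    ∃ U, MeasurableSet[predSigma 𝒢] U ∧ ∀ t, ∀ ω ∈ E, (t, ω) ∈ U ↔ T ω < t := by
  obtain ⟨Q, hQc, hQd⟩ := TopologicalSpace.exists_countable_dense ℝ≥0∞
  choose D hD hDT using hT𝒢
  refine ⟨⋃ q ∈ Q, Ioc q ⊤ ×ˢ D q,
    .biUnion hQc fun q _ => measurableSet_predSigma_Ioc_prod q ⊤ (hD q), fun t ω hω => ?_⟩
  simp only [mem_iUnion, mem_prod, mem_Ioc, le_top, and_true, exists_prop]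
  constructor
  · rintro ⟨q, -, hqt, hωD⟩
    exact ((hDT q ω hω).1 hωD).trans_lt hqt
  · intro hTt
    obtain ⟨q, hqQ, hTq, hqt⟩ := hQd.exists_between hTt
    exact ⟨q, hqQ, hqt, (hDT q ω hω).2 hTq.le⟩

theorem measurableSet_fragSupport (h𝒢 : ContainsTraceBetween G 𝒢 S T)
    (hS : IsStoppingTime G fun ω => (S ω : WithTop ℝ≥0∞))
    (hT : IsStoppingTime G fun ω => (T ω : WithTop ℝ≥0∞)) :
    MeasurableSet[predSigma 𝒢] (fragSupport S T) := by
  simpa [fragSupport] using measurableSet_predSigma_Ioc_inter h𝒢 hS (fun _ => le_rfl) ⊤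
    (measurableSet_sigmaAt_lt hS hT) subset_rfl

theorem measurableSet_stochasticIoc (h𝒢 : ContainsTraceBetween G 𝒢 S T)
    (hT𝒢 : IsStoppingFamOn 𝒢 T {ω | S ω < T ω})
    (hS : IsStoppingTime G fun ω => (S ω : WithTop ℝ≥0∞))
    (hT : IsStoppingTime G fun ω => (T ω : WithTop ℝ≥0∞)) :
    MeasurableSet[predSigma 𝒢] (stochasticIoc S T) := by
  obtain ⟨U, hU, hUT⟩ := exists_measurableSet_predSigma_iff_lt hT𝒢
  convert (measurableSet_fragSupport h𝒢 hS hT).diff hU using 1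
  ext ⟨t, ω⟩
  simp only [stochasticIoc, fragSupport, mem_ofPred_eq, Set.mem_sdiff]
  constructor
  · rintro ⟨hSt, htT⟩
    exact ⟨⟨hSt, hSt.trans_le htT⟩, fun hU => htT.not_gt ((hUT t ω (hSt.trans_le htT)).1 hU)⟩
  · rintro ⟨⟨hSt, hST⟩, hU⟩
    exact ⟨hSt, not_lt.1 fun h => hU ((hUT t ω hST).2 h)⟩

theorem fragTime_of_mem_fragSupport {p : ℝ≥0∞ × Ω} (hp : p ∈ fragSupport S T) :
    fragTime S T p = (min p.1 (T p.2), p.2) := by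
  simp [fragTime, max_eq_right hp.1.le, max_eq_right hp.2.le]

theorem measurableSet_fragTime_preimage_inter (h𝒢 : ContainsTraceBetween G 𝒢 S T)
    (hT𝒢 : IsStoppingFamOn 𝒢 T {ω | S ω < T ω}) (h𝒜 : TraceLeSigmaAt G 𝒜 S T)
    (hS : IsStoppingTime G fun ω => (S ω : WithTop ℝ≥0∞))
    (hT : IsStoppingTime G fun ω => (T ω : WithTop ℝ≥0∞))
    {C : Set (ℝ≥0∞ × Ω)} (hC : MeasurableSet[predSigma 𝒜] C) :
    MeasurableSet[predSigma 𝒢] (fragTime S T ⁻¹' C ∩ fragSupport S T) := by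
  refine (measurableSet_fragSupport h𝒢 hS hT).preimage_inter_of_generateFrom ?_ hC
  rintro _ (⟨a, b, A, hA, rfl⟩ | ⟨A, -, rfl⟩)
  · obtain ⟨D, hD, hDT⟩ := hT𝒢 b
    have hV := fun c => measurableSet_predSigma_Ioc_inter h𝒢 (isStoppingTime_max_const hS a)
      (fun ω => le_max_left _ a) c (h𝒜 a A hA) inter_subset_right
    convert (hV b).union ((hV ⊤).inter (measurableSet_predSigma_Ioc_prod b ⊤ hD)) using 1
    ext ⟨t, ω⟩
    by_cases hp : (t, ω) ∈ fragSupport S T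
    · simp only [mem_inter_iff, mem_preimage, fragTime_of_mem_fragSupport hp, hp, and_true,
        mem_union, mem_ofPred_eq, mem_prod, mem_Ioc, hDT ω hp.2, lt_min_iff, min_le_iff,
        max_lt_iff, le_top, true_and]
      grind [hp.1, hp.2]
    · simp only [fragSupport, mem_ofPred_eq, not_and_or, not_lt] at hp
      simp only [mem_inter_iff, mem_union, mem_ofPred_eq, max_lt_iff, fragSupport]
      grind
  · convert @MeasurableSet.empty _ (predSigma 𝒢)
    ext ⟨t, ω⟩
    simp only [mem_inter_iff, mem_preimage, mem_prod, mem_singleton_iff, mem_empty_iff_false,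
      iff_false, not_and]
    intro h hp
    rw [fragTime_of_mem_fragSupport hp] at h
    exact (pos_of_gt (lt_min hp.1 hp.2)).ne' h.1

theorem measurableSet_startTime_preimage_inter (h𝒢 : ContainsTraceBetween G 𝒢 S T)
    (h𝒜 : TraceLeSigmaAt G 𝒜 S T) (hS : IsStoppingTime G fun ω => (S ω : WithTop ℝ≥0∞))
    (hT : IsStoppingTime G fun ω => (T ω : WithTop ℝ≥0∞))
    {C : Set (ℝ≥0∞ × Ω)} (hC : MeasurableSet[predSigma 𝒜] C) :
    MeasurableSet[predSigma 𝒢] (startTime S ⁻¹' C ∩ fragSupport S T) := by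
  have hV : ∀ a A E, MeasurableSet[𝒜 a] A → MeasurableSet[sigmaAt G fun ω => max (S ω) a] E →
      MeasurableSet[predSigma 𝒢] {p | max (S p.2) a < p.1 ∧ p.1 ≤ ⊤ ∧
        p.2 ∈ A ∩ {ω | max (S ω) a < T ω} ∩ E} := fun a A E hA hE =>
    measurableSet_predSigma_Ioc_inter h𝒢 (isStoppingTime_max_const hS a)
      (fun ω => le_max_left _ a) ⊤ ((h𝒜 a A hA).inter hE) fun ω hω => hω.1.2
  refine (measurableSet_fragSupport h𝒢 hS hT).preimage_inter_of_generateFrom ?_ hC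
  rintro _ (⟨a, b, A, hA, rfl⟩ | ⟨A, hA, rfl⟩)
  · have hR := isStoppingTime_max_const hS a
    convert hV a A _ hA ((measurableSet_sigmaAt_le_const hR a).compl.inter
      (measurableSet_sigmaAt_le_const hR b)) using 1
    ext ⟨t, ω⟩
    simp only [startTime, fragSupport, mem_inter_iff, mem_preimage, mem_prod, mem_Ioc,
      mem_ofPred_eq, mem_compl_iff, max_lt_iff, max_le_iff, le_top, true_and, not_and_or, not_le]
    grind
  · convert hV 0 A _ hA (measurableSet_sigmaAt_le_const (isStoppingTime_max_const hS 0) 0) using 1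
    ext ⟨t, ω⟩
    simp only [startTime, fragSupport, mem_inter_iff, mem_preimage, mem_prod, mem_singleton_iff,
      mem_ofPred_eq, zero_le, sup_of_le_left, le_top, true_and, nonpos_iff_eq_zero]
    grind

theorem measurable_frag (h𝒢 : ContainsTraceBetween G 𝒢 S T)
    (hT𝒢 : IsStoppingFamOn 𝒢 T {ω | S ω < T ω}) (h𝒜 : TraceLeSigmaAt G 𝒜 S T)
    (hS : IsStoppingTime G fun ω => (S ω : WithTop ℝ≥0∞))
    (hT : IsStoppingTime G fun ω => (T ω : WithTop ℝ≥0∞)) {K : ℝ≥0∞ → Ω → ℝ}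
    (hK : Measurable[predSigma 𝒜] fun p : ℝ≥0∞ × Ω => K p.1 p.2) :
    Measurable[predSigma 𝒢] fun p : ℝ≥0∞ × Ω => frag S T K p.1 p.2 := by
  set K' := fun p : ℝ≥0∞ × Ω => K p.1 p.2
  have hfrag : (fun p : ℝ≥0∞ × Ω => frag S T K p.1 p.2) =
      (fragSupport S T).indicator (K' ∘ fragTime S T) -
        (fragSupport S T).indicator (K' ∘ startTime S) := by
    ext ⟨t, ω⟩
    by_cases hp : (t, ω) ∈ fragSupport S T
    · simp [indicator_of_mem hp, frag, fragTime, startTime, K']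
    · rw [Pi.sub_apply, indicator_of_notMem hp, indicator_of_notMem hp, sub_zero]
      simp only [fragSupport, mem_ofPred_eq, not_and_or, not_lt] at hp
      rcases hp with h | h <;> simp [frag, max_eq_left h]
  rw [hfrag]
  refine .sub (.indicator_of_preimage_inter (measurableSet_fragSupport h𝒢 hS hT) fun B hB => ?_)
    (.indicator_of_preimage_inter (measurableSet_fragSupport h𝒢 hS hT) fun B hB => ?_)
  · exact measurableSet_fragTime_preimage_inter h𝒢 hT𝒢 h𝒜 hS hT (hK hB)
  · exact measurableSet_startTime_preimage_inter h𝒢 h𝒜 hS hT (hK hB)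

theorem measurable_ite_stochasticIoc (h𝒢 : ContainsTraceBetween G 𝒢 S T)
    (hT𝒢 : IsStoppingFamOn 𝒢 T {ω | S ω < T ω}) (h𝒜 : TraceLeSigmaAt G 𝒜 S T)
    (hS : IsStoppingTime G fun ω => (S ω : WithTop ℝ≥0∞))
    (hT : IsStoppingTime G fun ω => (T ω : WithTop ℝ≥0∞)) {K : ℝ≥0∞ → Ω → ℝ}
    (hK : Measurable[predSigma 𝒜] fun p : ℝ≥0∞ × Ω => K p.1 p.2) :
    Measurable[predSigma 𝒢]
      fun p : ℝ≥0∞ × Ω => if S p.2 < p.1 ∧ p.1 ≤ T p.2 then K p.1 p.2 else 0 := by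
  set K' := fun p : ℝ≥0∞ × Ω => K p.1 p.2
  have hfragK : Measurable[predSigma 𝒢] ((fragSupport S T).indicator (K' ∘ fragTime S T)) :=
    .indicator_of_preimage_inter (measurableSet_fragSupport h𝒢 hS hT) fun B hB =>
      measurableSet_fragTime_preimage_inter h𝒢 hT𝒢 h𝒜 hS hT (hK hB)
  convert hfragK.indicator (measurableSet_stochasticIoc h𝒢 hT𝒢 hS hT) using 1
  ext p
  by_cases hp : S p.2 < p.1 ∧ p.1 ≤ T p.2
  · have hp' : p ∈ fragSupport S T := ⟨hp.1, hp.1.trans_le hp.2⟩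
    rw [if_pos hp, indicator_of_mem (s := stochasticIoc S T) hp, indicator_of_mem hp',
      Function.comp_apply, fragTime_of_mem_fragSupport hp', min_eq_left hp.2]
  · rw [if_neg hp, indicator_of_notMem (s := stochasticIoc S T) hp]

end Predictable

section Conditions

variable {G} {S T : Ω → ℝ≥0∞}

theorem containsTraceBetween_self (hT : IsStoppingTime G fun ω => (T ω : WithTop ℝ≥0∞)) :
    ContainsTraceBetween G (fun t => G t) S T := fun q _ hM _ =>
  hM.inter <| by
    simpa only [compl_ofPred, not_le] using (measurableSet_le_of_isStoppingTime hT q).compl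

theorem isStoppingFamOn_self (hT : IsStoppingTime G fun ω => (T ω : WithTop ℝ≥0∞))
    (E : Set Ω) : IsStoppingFamOn (fun t => G t) T E := fun q =>
  ⟨_, measurableSet_le_of_isStoppingTime hT q, fun _ _ => Iff.rfl⟩

theorem traceLeSigmaAt_self (hS : IsStoppingTime G fun ω => (S ω : WithTop ℝ≥0∞))
    (hT : IsStoppingTime G fun ω => (T ω : WithTop ℝ≥0∞)) :
    TraceLeSigmaAt G (fun t => G t) S T := fun a _ hA =>
  have hR := isStoppingTime_max_const hS a
  (measurableSet_sigmaAt_of_le hR (fun _ => le_max_right _ a) hA).inter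
    (measurableSet_sigmaAt_lt hR hT)

theorem containsTraceBetween_gFrag (hS : IsStoppingTime G fun ω => (S ω : WithTop ℝ≥0∞)) :
    ContainsTraceBetween G (gFrag F G τ S T) S T := by
  intro q M hM hMS
  refine MeasurableSpace.measurableSet_generateFrom ⟨∅, @MeasurableSet.empty _ (gStar F τ T), M,
    measurableSet_sigmaAt_of_le (isStoppingTime_max_const hS q) (fun _ => le_max_right _ q) hM, ?_⟩
  ext ω
  simp only [mem_inter_iff, mem_union, mem_ofPred_eq, inter_empty, mem_empty_iff_false, false_or,
    max_lt_iff]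
  grind

theorem isStoppingFamOn_gFrag : IsStoppingFamOn (gFrag F G τ S T) T {ω | S ω < T ω} := by
  refine fun q => ⟨{ω | T ω ≤ max (S ω) q}, MeasurableSpace.measurableSet_generateFrom
    ⟨univ, @MeasurableSet.univ _ (gStar F τ T), ∅,
      @MeasurableSet.empty _ (sigmaAt G fun ω => max (S ω) q), by simp⟩,
    fun ω (hω : S ω < T ω) => ?_⟩
  simp only [mem_ofPred_eq, le_max_iff, not_le.2 hω, false_or]

theorem traceLeSigmaAt_gFrag (hS : IsStoppingTime G fun ω => (S ω : WithTop ℝ≥0∞))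
    (hT : IsStoppingTime G fun ω => (T ω : WithTop ℝ≥0∞)) :
    TraceLeSigmaAt G (gFrag F G τ S T) S T := by
  intro a A hA
  have hRT := measurableSet_sigmaAt_lt (isStoppingTime_max_const hS a) hT
  refine hRT.preimage_inter_of_generateFrom (f := id) ?_ hA
  rintro _ ⟨A₁, -, B, hB, rfl⟩
  convert hB.inter hRT using 1
  ext ω
  simp only [preimage_id, mem_inter_iff, mem_union, mem_ofPred_eq]
  grind

end Conditions

theorem gFrag_predictable (S T : Ω → ℝ≥0∞) (hS : IsStoppingTime G (fun ω => (S ω : WithTop ℝ≥0∞)))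
    (hT : IsStoppingTime G (fun ω => (T ω : WithTop ℝ≥0∞))) :
    (∀ K : ℝ≥0∞ → Ω → ℝ,
      Measurable[predSigma (fun t => (G t : MeasurableSpace Ω))]
        (fun p : ℝ≥0∞ × Ω => K p.1 p.2) →
      Measurable[predSigma (gFrag F G τ S T)] (fun p : ℝ≥0∞ × Ω => frag S T K p.1 p.2) ∧
      Measurable[predSigma (gFrag F G τ S T)]
        (fun p : ℝ≥0∞ × Ω => if S p.2 < p.1 ∧ p.1 ≤ T p.2 then K p.1 p.2 else 0)) ∧
    ∀ K₂ : ℝ≥0∞ → Ω → ℝ,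
      Measurable[predSigma (gFrag F G τ S T)] (fun p : ℝ≥0∞ × Ω => K₂ p.1 p.2) →
      Measurable[predSigma (fun t => (G t : MeasurableSpace Ω))]
        (fun p : ℝ≥0∞ × Ω => frag S T K₂ p.1 p.2) ∧
      Measurable[predSigma (fun t => (G t : MeasurableSpace Ω))]
        (fun p : ℝ≥0∞ × Ω => if S p.2 < p.1 ∧ p.1 ≤ T p.2 then K₂ p.1 p.2 else 0) := by
  have hFragBetween := containsTraceBetween_gFrag F τ (T := T) hS
  have hFragStop := isStoppingFamOn_gFrag F τ (G := G) (S := S) (T := T)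
  have hFragTrace := traceLeSigmaAt_gFrag F τ hS hT
  have hGBetween := containsTraceBetween_self (S := S) hT
  have hGStop := isStoppingFamOn_self hT {ω | S ω < T ω}
  have hGTrace := traceLeSigmaAt_self hS hT
  exact ⟨fun K hK => ⟨measurable_frag hFragBetween hFragStop hGTrace hS hT hK,
      measurable_ite_stochasticIoc hFragBetween hFragStop hGTrace hS hT hK⟩,
    fun K hK => ⟨measurable_frag hGBetween hGStop hFragTrace hS hT hK,
      measurable_ite_stochasticIoc hGBetween hGStop hFragTrace hS hT hK⟩⟩

end
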